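/- Let μ be an N-extremal solution of the moment problem and let λ ∈ ℂ \ supp(μ). Then for every x ∈ supp(μ) one has D(λ,x) ≠ 0 and ∫ 1/(s−λ) dμ(s) = −C(λ,x)/D(λ,x); in particular the ratio C(λ,x)/D(λ,x) does not depend on x ∈ supp(μ). -/

import Mathlib

open Filter Topology MeasureTheory

noncomputable section

/-- Action of the Jacobi matrix `J` on a complex sequence:
`(Jc)ₙ = aₙ₋₁cₙ₋₁ + bₙcₙ + aₙcₙ₊₁` with `a₋₁ := 0`. -/
def jacobiMul (a b : ℕ → ℝ) (c : ℕ → ℂ) : ℕ → ℂ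
  | 0 => (b 0 : ℂ) * c 0 + (a 0 : ℂ) * c 1
  | n + 1 => (a n : ℂ) * c n + (b (n + 1) : ℂ) * c (n + 1) + (a (n + 1) : ℂ) * c (n + 2)

/-- `jacobiGraph a b f g` means: `f` belongs to the domain `D(T)` of the closure `T` of the
Jacobi matrix acting on the finitely supported sequences, and `T f = g`; i.e. there are
finitely supported sequences `u k → f` in `ℓ²` such that `J (u k) → g` in `ℓ²`. -/
def jacobiGraph (a b : ℕ → ℝ) (f g : ℕ → ℂ) : Prop :=
  ∃ u : ℕ → ℕ → ℂ,
    (∀ k, (Function.support (u k)).Finite) ∧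
    (∀ k, Summable fun n => ‖u k n - f n‖ ^ 2) ∧
    Tendsto (fun k => ∑' n, ‖u k n - f n‖ ^ 2) atTop (𝓝 0) ∧
    (∀ k, Summable fun n => ‖jacobiMul a b (u k) n - g n‖ ^ 2) ∧
    Tendsto (fun k => ∑' n, ‖jacobiMul a b (u k) n - g n‖ ^ 2) atTop (𝓝 0)

/-- Membership in the domain `D(T)` of the Jacobi operator. -/
def inDomT (a b : ℕ → ℝ) (f : ℕ → ℂ) : Prop := ∃ g, jacobiGraph a b f g

/-- The `ℓ²` norm of a complex sequence. -/
def l2norm (f : ℕ → ℂ) : ℝ := Real.sqrt (∑' n, ‖f n‖ ^ 2)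

/-- The data of an indeterminate Hamburger moment problem: Jacobi parameters `a`, `b`,
the orthonormal polynomials `p` and second-kind polynomials `q` (as entire functions),
determined by the three-term recurrence, together with the indeterminacy condition
`∑ₙ (|pₙ(z)|² + |qₙ(z)|²) < ∞` for all `z`. -/
structure JacobiSetup where
  a : ℕ → ℝ
  b : ℕ → ℝ
  ha : ∀ n, 0 < a n
  p : ℕ → ℂ → ℂ
  q : ℕ → ℂ → ℂ
  hp0 : ∀ z, p 0 z = 1
  hp1 : ∀ z, p 1 z = (z - (b 0 : ℂ)) / (a 0 : ℂ)
  hq0 : ∀ z, q 0 z = 0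
  hq1 : ∀ z, q 1 z = 1 / (a 0 : ℂ)
  hrecp : ∀ n z, z * p (n + 1) z =
    (a (n + 1) : ℂ) * p (n + 2) z + (b (n + 1) : ℂ) * p (n + 1) z + (a n : ℂ) * p n z
  hrecq : ∀ n z, z * q (n + 1) z =
    (a (n + 1) : ℂ) * q (n + 2) z + (b (n + 1) : ℂ) * q (n + 1) z + (a n : ℂ) * q n z
  indet : ∀ z : ℂ, Summable fun n => ‖p n z‖ ^ 2 + ‖q n z‖ ^ 2

/-- The Nevanlinna function `A(u,v)`. -/
def nevA (S : JacobiSetup) (u v : ℂ) : ℂ := (u - v) * ∑' k, S.q k u * S.q k v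
/-- The Nevanlinna function `B(u,v)`. -/
def nevB (S : JacobiSetup) (u v : ℂ) : ℂ := -1 + (u - v) * ∑' k, S.p k u * S.q k v
/-- The Nevanlinna function `C(u,v)`. -/
def nevC (S : JacobiSetup) (u v : ℂ) : ℂ := 1 + (u - v) * ∑' k, S.q k u * S.p k v
/-- The Nevanlinna function `D(u,v)`. -/
def nevD (S : JacobiSetup) (u v : ℂ) : ℂ := (u - v) * ∑' k, S.p k u * S.p k v

/-- The support of a measure on `ℝ`: points all of whose neighbourhoods have
positive measure. -/
def measSupport (μ : Measure ℝ) : Set ℝ := {x | ∀ U ∈ 𝓝 x, μ U ≠ 0}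

/-- `μ` is a solution of the moment problem associated with `S`: a probability measure on `ℝ`
with moments of all orders for which the `pₙ` are orthonormal. -/
def IsSolution (S : JacobiSetup) (μ : Measure ℝ) : Prop :=
  IsProbabilityMeasure μ ∧
  (∀ n : ℕ, Integrable (fun x : ℝ => x ^ n) μ) ∧
  (∀ n m : ℕ, Integrable (fun x : ℝ => S.p n (x : ℂ) * S.p m (x : ℂ)) μ) ∧
  (∀ n m : ℕ, ∫ x : ℝ, S.p n (x : ℂ) * S.p m (x : ℂ) ∂μ = if n = m then 1 else 0)

/-- `μ` is an N-extremal solution: a solution for which the polynomials are dense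
in `L²(μ)`. -/
def IsNExtremal (S : JacobiSetup) (μ : Measure ℝ) : Prop :=
  IsSolution S μ ∧
  ∀ f : ℝ → ℂ, MemLp f 2 μ → ∀ ε : ℝ, 0 < ε →
    ∃ P : Polynomial ℂ, ∫ x : ℝ, ‖f x - Polynomial.eval (x : ℂ) P‖ ^ 2 ∂μ < ε

/-!
The orthonormal polynomials of an N-extremal solution `μ` form a Hilbert basis of `L²(μ)`. In this
basis the function `F(s) = (s - λ)⁻¹` has matrix `G k j = ∫ pₖ pⱼ F dμ`, whose columns satisfy the
three-term recurrence at `λ` up to a unit inhomogeneity on the diagonal. Hence `G k j = ψⱼ pₖ(λ)`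
for `k ≤ j`, where `ψ = q(λ) + w p(λ)` with `w = ∫ F dμ`. As `p(λ)` and `ψ` are square summable,
multiplication by `F` is Hilbert–Schmidt, and this forces every point `x` of the support to be an
atom. Pairing the expansion `F = ∑ ψₖ pₖ` with the indicator of `{x}` gives
`∑ ψₖ pₖ(x) = (x - λ)⁻¹`, i.e. `C(λ,x) + w D(λ,x) = 0`, and `D(λ,x) ≠ 0` because `AD - BC = 1`.
-/

open Finset ComplexConjugate

lemma summable_mul_of_summable_norm_sq {ι : Type*} {f g : ι → ℂ}
    (hf : Summable fun i => ‖f i‖ ^ 2) (hg : Summable fun i => ‖g i‖ ^ 2) :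
    Summable fun i => f i * g i := by
  refine Summable.of_norm (((hf.add hg).div_const 2).of_nonneg_of_le (fun _ => norm_nonneg _)
    fun i => ?_)
  rw [norm_mul]
  nlinarith [sq_nonneg (‖f i‖ - ‖g i‖)]

section L2

variable {α : Type*} [MeasurableSpace α] {μ : Measure α} {f g : α → ℂ}

lemma inner_toLp_eq_integral (hf : MemLp f 2 μ) (hg : MemLp g 2 μ) :
    inner ℂ (hf.toLp f) (hg.toLp g) = ∫ x, conj (f x) * g x ∂μ := by
  rw [L2.inner_def]
  refine integral_congr_ae ?_
  filter_upwards [hf.coeFn_toLp, hg.coeFn_toLp] with x hfx hgx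
  rw [hfx, hgx, RCLike.inner_apply, mul_comm]

lemma norm_toLp_sq (hf : MemLp f 2 μ) : ‖hf.toLp f‖ ^ 2 = ∫ x, ‖f x‖ ^ 2 ∂μ := by
  rw [norm_sq_eq_re_inner (𝕜 := ℂ), inner_toLp_eq_integral]
  simp only [Complex.conj_mul', ← Complex.ofReal_pow, integral_complex_ofReal,
    RCLike.re_to_complex, Complex.ofReal_re]

lemma norm_integral_sq_le [IsFiniteMeasure μ] (hf : MemLp f 2 μ) :
    ‖∫ x, f x ∂μ‖ ^ 2 ≤ μ.real Set.univ * ∫ x, ‖f x‖ ^ 2 ∂μ := by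
  have h1 : MemLp (fun _ => (1 : ℂ)) 2 μ := memLp_const 1
  have := norm_inner_le_norm (𝕜 := ℂ) (h1.toLp _) (hf.toLp f)
  rw [inner_toLp_eq_integral] at this
  simp only [map_one, one_mul] at this
  calc ‖∫ x, f x ∂μ‖ ^ 2 ≤ (‖h1.toLp _‖ * ‖hf.toLp f‖) ^ 2 := by gcongr
    _ = _ := by rw [mul_pow, norm_toLp_sq, norm_toLp_sq]; simp

end L2

lemma tendsto_setIntegral_closedBall_of_measure_singleton {α G : Type*} [MetricSpace α]
    [MeasurableSpace α] [OpensMeasurableSpace α] [NormedAddCommGroup G] [NormedSpace ℝ G]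
    {μ : Measure α} [IsFiniteMeasure μ] {g : α → G} (hg : Integrable g μ) {x : α}
    (hx : μ {x} = 0) :
    Tendsto (fun r => ∫ s in Metric.closedBall x r, g s ∂μ) (𝓝[>] 0) (𝓝 0) := by
  refine hg.tendsto_setIntegral_nhds_zero ?_
  have := tendsto_measure_cthickening_of_isClosed (μ := μ) ⟨1, one_pos, measure_ne_top _ _⟩
    (isClosed_singleton (x := x))
  rw [hx] at this
  refine (this.mono_left nhdsWithin_le_nhds).congr' ?_
  filter_upwards [self_mem_nhdsWithin] with r hr
  rw [Function.comp_apply, Metric.cthickening_singleton x (le_of_lt hr)]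

lemma measSupport_eq_support (μ : Measure ℝ) : measSupport μ = μ.support := by
  ext x
  simp [measSupport, Measure.mem_support_iff_forall, pos_iff_ne_zero]

lemma exists_pos_ae_le_norm_sub (μ : Measure ℝ) {lam : ℂ}
    (hlam : ∀ x ∈ measSupport μ, (x : ℂ) ≠ lam) :
    ∃ d > 0, ∀ᵐ s : ℝ ∂μ, d ≤ ‖(s : ℂ) - lam‖ := by
  have hK : IsClosed (((↑) : ℝ → ℂ) '' measSupport μ) := by
    rw [measSupport_eq_support]
    exact Complex.isometry_ofReal.isClosedEmbedding.isClosedMap _ Measure.isClosed_support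
  have hlamK : lam ∉ ((↑) : ℝ → ℂ) '' measSupport μ := by
    rintro ⟨x, hx, rfl⟩
    exact hlam x hx rfl
  obtain ⟨ε, hε, hball⟩ := Metric.isOpen_iff.1 hK.isOpen_compl lam hlamK
  refine ⟨ε, hε, ?_⟩
  filter_upwards [Measure.support_mem_ae (μ := μ)] with s hs
  by_contra! h
  refine hball (by rwa [Metric.mem_ball, dist_eq_norm]) ⟨s, ?_, rfl⟩
  rwa [measSupport_eq_support]

lemma integral_mul_indicator_singleton {μ : Measure ℝ} (f : ℝ → ℂ) (x : ℝ) :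
    ∫ s, f s * ({x} : Set ℝ).indicator 1 s ∂μ = μ.real {x} * f x := by
  have : (fun s => f s * ({x} : Set ℝ).indicator 1 s) = ({x} : Set ℝ).indicator f := by
    funext s
    by_cases hs : s = x <;> simp [hs]
  rw [this, integral_indicator (measurableSet_singleton x), integral_singleton, Complex.real_smul]

section JacobiMatrix

variable {a b : ℕ → ℝ}

lemma jacobiMul_add (r t : ℕ → ℂ) (n : ℕ) :
    jacobiMul a b (fun k => r k + t k) n = jacobiMul a b r n + jacobiMul a b t n := by
  cases n <;> simp only [jacobiMul] <;> ring

lemma jacobiMul_const_mul (c : ℂ) (r : ℕ → ℂ) (n : ℕ) :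
    jacobiMul a b (fun k => c * r k) n = c * jacobiMul a b r n := by
  cases n <;> simp only [jacobiMul] <;> ring

lemma jacobiMul_mul_const (r : ℕ → ℂ) (c : ℂ) (n : ℕ) :
    jacobiMul a b (fun k => r k * c) n = jacobiMul a b r n * c := by
  cases n <;> simp only [jacobiMul] <;> ring

lemma integral_jacobiMul {α : Type*} [MeasurableSpace α] {μ : Measure α} {f : ℕ → α → ℂ}
    (hf : ∀ k, Integrable (f k) μ) (n : ℕ) :
    ∫ s, jacobiMul a b (fun k => f k s) n ∂μ = jacobiMul a b (fun k => ∫ s, f k s ∂μ) n := by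
  have hc := fun k (c : ℂ) => (hf k).const_mul c
  cases n with
  | zero =>
    simp only [jacobiMul]
    rw [integral_add (hc _ _) (hc _ _), integral_const_mul, integral_const_mul]
  | succ n =>
    simp only [jacobiMul]
    have hc2 : Integrable (fun s => (a n : ℂ) * f n s + (b (n + 1) : ℂ) * f (n + 1) s) μ :=
      (hc _ _).add (hc _ _)
    rw [integral_add hc2 (hc _ _), integral_add (hc _ _) (hc _ _),
      integral_const_mul, integral_const_mul, integral_const_mul]

/-- Lagrange's identity for the symmetric Jacobi matrix. -/
lemma sum_jacobiMul_mul_sub_mul_jacobiMul (r t : ℕ → ℂ) (N : ℕ) :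
    ∑ k ∈ range (N + 1), (jacobiMul a b r k * t k - r k * jacobiMul a b t k) =
      a N * (r (N + 1) * t N - r N * t (N + 1)) := by
  induction N with
  | zero => simp only [zero_add, sum_range_one, jacobiMul]; ring
  | succ N ih => rw [sum_range_succ, ih]; simp only [jacobiMul]; ring

lemma sub_mul_sum_mul_eq_of_jacobiMul {r t : ℕ → ℂ} {u v α β : ℂ}
    (hr : ∀ n, jacobiMul a b r n = u * r n + if n = 0 then α else 0)
    (ht : ∀ n, jacobiMul a b t n = v * t n + if n = 0 then β else 0) (N : ℕ) :
    (u - v) * ∑ k ∈ range (N + 1), r k * t k =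
      a N * (r (N + 1) * t N - r N * t (N + 1)) - α * t 0 + β * r 0 := by
  rw [← sum_jacobiMul_mul_sub_mul_jacobiMul (b := b), mul_sum, sum_range_succ', sum_range_succ']
  simp only [hr, ht, Nat.add_one_ne_zero, ↓reduceIte, add_zero]
  rw [sum_congr rfl fun k _ => show (u * r (k + 1)) * t (k + 1) - r (k + 1) * (v * t (k + 1)) =
    (u - v) * (r (k + 1) * t (k + 1)) by ring]
  ring

lemma eq_of_jacobiMul_sub_eq (ha : ∀ n, a n ≠ 0) {z : ℂ} {r t : ℕ → ℂ} {N : ℕ}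
    (h : ∀ n < N, jacobiMul a b r n - z * r n = jacobiMul a b t n - z * t n)
    (h0 : r 0 = t 0) : ∀ n ≤ N, r n = t n := by
  have ha' : ∀ n, (a n : ℂ) ≠ 0 := fun n => Complex.ofReal_ne_zero.2 (ha n)
  suffices H : ∀ n ≤ N, r n = t n ∧ (n < N → r (n + 1) = t (n + 1)) from fun n hn => (H n hn).1
  intro n
  induction n with
  | zero =>
    refine fun _ => ⟨h0, fun hN => mul_left_cancel₀ (ha' 0) ?_⟩
    have := h 0 hN
    simp only [jacobiMul] at this
    linear_combination this + (z - b 0) * h0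
  | succ n ih =>
    intro hn
    obtain ⟨h1, h2⟩ := ih (by omega)
    refine ⟨h2 (by omega), fun hN => mul_left_cancel₀ (ha' (n + 1)) ?_⟩
    have := h (n + 1) hN
    simp only [jacobiMul] at this
    linear_combination this - (a n : ℂ) * h1 + (z - b (n + 1)) * h2 (by omega)

end JacobiMatrix

namespace JacobiSetup

variable (S : JacobiSetup)

lemma a_ne_zero (n : ℕ) : (S.a n : ℂ) ≠ 0 := Complex.ofReal_ne_zero.2 (S.ha n).ne'

lemma p_add_two (n : ℕ) (z : ℂ) :
    S.p (n + 2) z = ((z - S.b (n + 1)) * S.p (n + 1) z - S.a n * S.p n z) / S.a (n + 1) := by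
  rw [eq_div_iff (S.a_ne_zero _)]
  linear_combination -S.hrecp n z

lemma jacobiMul_p (z : ℂ) (n : ℕ) : jacobiMul S.a S.b (fun k => S.p k z) n = z * S.p n z := by
  cases n with
  | zero =>
    simp only [jacobiMul, S.hp0, S.hp1]
    field_simp [S.a_ne_zero 0]
    ring
  | succ n => simp only [jacobiMul, S.hrecp]; ring

lemma jacobiMul_q (z : ℂ) (n : ℕ) :
    jacobiMul S.a S.b (fun k => S.q k z) n = z * S.q n z + if n = 0 then 1 else 0 := by
  cases n with
  | zero =>
    simp only [jacobiMul, S.hq0, S.hq1, if_true]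
    field_simp [S.a_ne_zero 0]
    ring
  | succ n => simp only [jacobiMul, S.hrecq, Nat.add_one_ne_zero, if_false]; ring

lemma continuous_p (n : ℕ) : Continuous (S.p n) := by
  induction n using Nat.twoStepInduction with
  | zero => simp only [funext S.hp0]; exact continuous_const
  | one => simp only [funext S.hp1]; fun_prop
  | more n h0 h1 => simp only [funext (S.p_add_two n)]; fun_prop

lemma conj_p_ofReal (n : ℕ) (s : ℝ) : conj (S.p n s) = S.p n s := by
  induction n using Nat.twoStepInduction with
  | zero => simp [S.hp0]
  | one => simp [S.hp1]
  | more n h0 h1 => simp [S.p_add_two, h0, h1]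

lemma summable_norm_p_sq (z : ℂ) : Summable fun n => ‖S.p n z‖ ^ 2 :=
  (S.indet z).of_nonneg_of_le (fun _ => by positivity)
    fun _ => le_add_of_nonneg_right (by positivity)

lemma summable_norm_q_sq (z : ℂ) : Summable fun n => ‖S.q n z‖ ^ 2 :=
  (S.indet z).of_nonneg_of_le (fun _ => by positivity)
    fun _ => le_add_of_nonneg_left (by positivity)

lemma jacobiMul_p_add_ite (z : ℂ) (n : ℕ) :
    jacobiMul S.a S.b (fun k => S.p k z) n = z * S.p n z + if n = 0 then 0 else 0 := by
  rw [S.jacobiMul_p, ite_self, add_zero]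

lemma wronskian (N : ℕ) (z : ℂ) :
    S.a N * (S.p (N + 1) z * S.q N z - S.p N z * S.q (N + 1) z) = -1 := by
  have := sub_mul_sum_mul_eq_of_jacobiMul (S.jacobiMul_p_add_ite z) (S.jacobiMul_q z) N
  simp only [sub_self, zero_mul, S.hp0] at this
  linear_combination -this

lemma nevA_mul_nevD_sub_nevB_mul_nevC (u v : ℂ) :
    nevA S u v * nevD S u v - nevB S u v * nevC S u v = 1 := by
  have tendsto_partial : ∀ {r t : ℕ → ℂ}, (Summable fun k => ‖r k‖ ^ 2) →
      (Summable fun k => ‖t k‖ ^ 2) → Tendsto (fun N => (u - v) * ∑ k ∈ range (N + 1), r k * t k)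
        atTop (𝓝 ((u - v) * ∑' k, r k * t k)) := fun hr ht =>
    ((summable_mul_of_summable_norm_sq hr ht).hasSum.tendsto_sum_nat.comp
      (tendsto_add_atTop_nat 1)).const_mul _
  have hA := tendsto_partial (S.summable_norm_q_sq u) (S.summable_norm_q_sq v)
  have hB := tendsto_partial (S.summable_norm_p_sq u) (S.summable_norm_q_sq v)
  have hC := tendsto_partial (S.summable_norm_q_sq u) (S.summable_norm_p_sq v)
  have hD := tendsto_partial (S.summable_norm_p_sq u) (S.summable_norm_p_sq v)
  refine tendsto_nhds_unique ((hA.mul hD).sub ((hB.const_add (-1)).mul (hC.const_add 1)))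
    (tendsto_const_nhds.congr fun N => ?_)
  have hp := S.jacobiMul_p_add_ite
  have hq := S.jacobiMul_q
  rw [sub_mul_sum_mul_eq_of_jacobiMul (hq u) (hq v), sub_mul_sum_mul_eq_of_jacobiMul (hp u) (hp v),
    sub_mul_sum_mul_eq_of_jacobiMul (hp u) (hq v), sub_mul_sum_mul_eq_of_jacobiMul (hq u) (hp v)]
  simp only [S.hp0, S.hq0]
  linear_combination -(S.a N * (S.p (N + 1) v * S.q N v - S.p N v * S.q (N + 1) v)) *
    S.wronskian N u + S.wronskian N v

open Polynomial in
lemma eval_mem_span_p (P : ℂ[X]) : (fun z => P.eval z) ∈ Submodule.span ℂ (Set.range S.p) := by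
  set V := Submodule.span ℂ (Set.range S.p)
  have mem : ∀ n, S.p n ∈ V := fun n => Submodule.subset_span ⟨n, rfl⟩
  have hmul : V ≤ V.comap (LinearMap.mulLeft ℂ id) := by
    refine Submodule.span_le.2 ?_
    rintro _ ⟨n, rfl⟩
    have h : id * S.p n = fun z => jacobiMul S.a S.b (fun k => S.p k z) n :=
      funext fun z => (S.jacobiMul_p z n).symm
    change id * S.p n ∈ V
    rw [h]
    cases n with
    | zero => exact add_mem (V.smul_mem _ (mem 0)) (V.smul_mem _ (mem 1))
    | succ n =>
      exact add_mem (add_mem (V.smul_mem _ (mem _)) (V.smul_mem _ (mem _))) (V.smul_mem _ (mem _))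
  induction P using Polynomial.induction_on with
  | C c =>
    convert V.smul_mem c (mem 0) using 1
    funext z
    simp [S.hp0]
  | add P Q hP hQ =>
    simp only [eval_add]
    exact add_mem hP hQ
  | monomial n c h =>
    convert Submodule.mem_comap.1 (hmul h) using 1
    funext z
    simp only [eval_mul, eval_C, eval_pow, eval_X, LinearMap.mulLeft_apply, Pi.mul_apply, id]
    ring

lemma nevC_add_mul_nevD_eq_zero {lam w z : ℂ} (hz : z ≠ lam)
    (h : HasSum (fun k => (S.q k lam + w * S.p k lam) * S.p k z) (z - lam)⁻¹) :
    nevC S lam z + w * nevD S lam z = 0 := by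
  have hqp := summable_mul_of_summable_norm_sq (S.summable_norm_q_sq lam) (S.summable_norm_p_sq z)
  have hpp := summable_mul_of_summable_norm_sq (S.summable_norm_p_sq lam) (S.summable_norm_p_sq z)
  have hsum : ∑' k, S.q k lam * S.p k z + w * ∑' k, S.p k lam * S.p k z = (z - lam)⁻¹ := by
    rw [← h.tsum_eq, ← tsum_mul_left, ← hqp.tsum_add (hpp.mul_left w)]
    exact tsum_congr fun k => by ring
  rw [nevC, nevD]
  linear_combination (lam - z) * hsum - mul_inv_cancel₀ (sub_ne_zero.2 hz)

lemma nevD_ne_zero_of_nevC_add_mul_nevD_eq_zero {u v w : ℂ}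
    (h : nevC S u v + w * nevD S u v = 0) : nevD S u v ≠ 0 := by
  intro hD
  have := S.nevA_mul_nevD_sub_nevB_mul_nevC u v
  rw [hD, mul_zero, add_zero] at h
  rw [hD, h] at this
  simp at this

end JacobiSetup

section Moments

variable {S : JacobiSetup} {μ : Measure ℝ} {lam : ℂ} {d : ℝ}

lemma IsSolution.memLp_p (hsol : IsSolution S μ) (n : ℕ) : MemLp (fun s : ℝ => S.p n s) 2 μ :=
  (memLp_two_iff_integrable_sq_norm
    ((S.continuous_p n).comp Complex.continuous_ofReal).aestronglyMeasurable).2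
    ((hsol.2.2.1 n n).norm.congr
      (.of_forall fun s => by simp only [norm_mul, sq, Function.comp_apply]))

lemma IsSolution.integral_p_mul_eq_inner (hsol : IsSolution S μ) (n : ℕ) {g : ℝ → ℂ}
    (hg : MemLp g 2 μ) :
    ∫ s, S.p n s * g s ∂μ = inner ℂ ((hsol.memLp_p n).toLp _) (hg.toLp g) := by
  simp only [inner_toLp_eq_integral, S.conj_p_ofReal]

lemma IsSolution.orthonormal (hsol : IsSolution S μ) :
    Orthonormal ℂ fun n => (hsol.memLp_p n).toLp _ := by
  refine orthonormal_iff_ite.2 fun m n => ?_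
  rw [← hsol.integral_p_mul_eq_inner, hsol.2.2.2]

lemma IsNExtremal.dense_span (hμ : IsNExtremal S μ) :
    ⊤ ≤ (Submodule.span ℂ (Set.range fun n => (hμ.1.memLp_p n).toLp _)).topologicalClosure := by
  set W := Submodule.span ℂ (Set.range fun n => (hμ.1.memLp_p n).toLp _)
  have toLp_mem : ∀ f ∈ Submodule.span ℂ (Set.range S.p),
      ∃ hf : MemLp (fun s : ℝ => f s) 2 μ, hf.toLp _ ∈ W := by
    intro f hf
    induction hf using Submodule.span_induction with
    | mem f hf =>
      obtain ⟨n, rfl⟩ := hf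
      exact ⟨hμ.1.memLp_p n, Submodule.subset_span ⟨n, rfl⟩⟩
    | zero => exact ⟨MemLp.zero, (congrArg (· ∈ W) (MemLp.toLp_zero _)).mpr W.zero_mem⟩
    | add f g _ _ hf hg =>
      obtain ⟨hf, hfW⟩ := hf
      obtain ⟨hg, hgW⟩ := hg
      exact ⟨hf.add hg, (congrArg (· ∈ W) (MemLp.toLp_add hf hg)).mpr (add_mem hfW hgW)⟩
    | smul c f _ hf =>
      obtain ⟨hf, hfW⟩ := hf
      exact ⟨hf.const_smul c,
        (congrArg (· ∈ W) (MemLp.toLp_const_smul c hf)).mpr (W.smul_mem c hfW)⟩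
  rintro x -
  refine Metric.mem_closure_iff.2 fun ε hε => ?_
  obtain ⟨P, hP⟩ := hμ.2 x (Lp.memLp x) (ε ^ 2) (by positivity)
  obtain ⟨_, hPW⟩ := toLp_mem _ (S.eval_mem_span_p P)
  refine ⟨_, hPW, lt_of_pow_lt_pow_left₀ 2 hε.le ?_⟩
  rwa [dist_eq_norm, ← Lp.toLp_coeFn x (Lp.memLp x), ← MemLp.toLp_sub, norm_toLp_sq]

def IsNExtremal.hilbertBasis (hμ : IsNExtremal S μ) : HilbertBasis ℕ ℂ (Lp ℂ 2 μ) :=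
  HilbertBasis.mk hμ.1.orthonormal hμ.dense_span

lemma IsNExtremal.hasSum_conj_integral_mul_integral (hμ : IsNExtremal S μ) {f g : ℝ → ℂ}
    (hf : MemLp f 2 μ) (hg : MemLp g 2 μ) :
    HasSum (fun n => conj (∫ s, S.p n s * f s ∂μ) * ∫ s, S.p n s * g s ∂μ)
      (∫ s, conj (f s) * g s ∂μ) := by
  rw [← inner_toLp_eq_integral hf hg]
  simp only [hμ.1.integral_p_mul_eq_inner _ hf, hμ.1.integral_p_mul_eq_inner _ hg, inner_conj_symm]
  simpa only [IsNExtremal.hilbertBasis, HilbertBasis.coe_mk]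
    using hμ.hilbertBasis.hasSum_inner_mul_inner (hf.toLp f) (hg.toLp g)

lemma IsNExtremal.hasSum_norm_integral_sq (hμ : IsNExtremal S μ) {g : ℝ → ℂ}
    (hg : MemLp g 2 μ) :
    HasSum (fun n => ‖∫ s, S.p n s * g s ∂μ‖ ^ 2) (∫ s, ‖g s‖ ^ 2 ∂μ) := by
  have := hμ.hasSum_conj_integral_mul_integral hg hg
  simp only [Complex.conj_mul', ← Complex.ofReal_pow, integral_complex_ofReal] at this
  exact Complex.hasSum_ofReal.1 this

lemma norm_inv_sub_le (hd : 0 < d) (hdist : ∀ᵐ s : ℝ ∂μ, d ≤ ‖(s : ℂ) - lam‖) :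
    ∀ᵐ s : ℝ ∂μ, ‖((s : ℂ) - lam)⁻¹‖ ≤ d⁻¹ :=
  hdist.mono fun s hs => by rw [norm_inv]; exact inv_anti₀ hd hs

lemma sub_mul_inv_sub (hd : 0 < d) (hdist : ∀ᵐ s : ℝ ∂μ, d ≤ ‖(s : ℂ) - lam‖) :
    ∀ᵐ s : ℝ ∂μ, ((s : ℂ) - lam) * ((s : ℂ) - lam)⁻¹ = 1 :=
  hdist.mono fun _ hs => mul_inv_cancel₀ (norm_pos_iff.1 (hd.trans_le hs))

lemma memLp_inv_sub [IsFiniteMeasure μ] (hd : 0 < d)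
    (hdist : ∀ᵐ s : ℝ ∂μ, d ≤ ‖(s : ℂ) - lam‖) :
    MemLp (fun s : ℝ => ((s : ℂ) - lam)⁻¹) 2 μ :=
  .of_bound (by fun_prop) d⁻¹ (norm_inv_sub_le hd hdist)

lemma IsSolution.memLp_p_mul_inv_sub (hsol : IsSolution S μ) (hd : 0 < d)
    (hdist : ∀ᵐ s : ℝ ∂μ, d ≤ ‖(s : ℂ) - lam‖) (n : ℕ) :
    MemLp (fun s : ℝ => S.p n s * ((s : ℂ) - lam)⁻¹) 2 μ :=
  (hsol.memLp_p n).of_le_mul (c := d⁻¹)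
    ((hsol.memLp_p n).aestronglyMeasurable.mul (by fun_prop))
    ((norm_inv_sub_le hd hdist).mono fun s hs => by
      rw [norm_mul, mul_comm]; exact mul_le_mul_of_nonneg_right hs (norm_nonneg _))

/-- The matrix of multiplication by `(s - λ)⁻¹` in the orthonormal family `(pₖ)`. -/
def greenMatrix (S : JacobiSetup) (μ : Measure ℝ) (lam : ℂ) (k j : ℕ) : ℂ :=
  ∫ s, S.p k s * (S.p j s * ((s : ℂ) - lam)⁻¹) ∂μ

lemma greenMatrix_comm (k j : ℕ) : greenMatrix S μ lam k j = greenMatrix S μ lam j k := by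
  simp only [greenMatrix, mul_left_comm]

lemma integral_p_mul_inv_sub (n : ℕ) :
    ∫ s, S.p n s * ((s : ℂ) - lam)⁻¹ ∂μ = greenMatrix S μ lam n 0 := by
  simp only [greenMatrix, S.hp0, one_mul]

lemma IsSolution.jacobiMul_greenMatrix (hsol : IsSolution S μ) (hd : 0 < d)
    (hdist : ∀ᵐ s : ℝ ∂μ, d ≤ ‖(s : ℂ) - lam‖) (j n : ℕ) :
    jacobiMul S.a S.b (fun k => greenMatrix S μ lam k j) n =
      lam * greenMatrix S μ lam n j + if n = j then 1 else 0 := by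
  have hint : ∀ k, Integrable (fun s : ℝ => S.p k s * (S.p j s * ((s : ℂ) - lam)⁻¹)) μ :=
    fun k => (hsol.memLp_p k).integrable_mul (hsol.memLp_p_mul_inv_sub hd hdist j)
  have hmul : ∀ᵐ s : ℝ ∂μ, (s : ℂ) * S.p n s * (S.p j s * ((s : ℂ) - lam)⁻¹) =
      lam * (S.p n s * (S.p j s * ((s : ℂ) - lam)⁻¹)) + S.p n s * S.p j s := by
    filter_upwards [sub_mul_inv_sub hd hdist] with s hs
    linear_combination (S.p n s * S.p j s) * hs
  simp only [greenMatrix]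
  rw [← integral_jacobiMul hint]
  simp only [jacobiMul_mul_const, S.jacobiMul_p]
  rw [integral_congr_ae hmul, integral_add ((hint n).const_mul lam) (hsol.2.2.1 n j),
    integral_const_mul, hsol.2.2.2]

lemma IsSolution.greenMatrix_eq_of_le (hsol : IsSolution S μ) (hd : 0 < d)
    (hdist : ∀ᵐ s : ℝ ∂μ, d ≤ ‖(s : ℂ) - lam‖) {k j : ℕ} (hkj : k ≤ j) :
    greenMatrix S μ lam k j = greenMatrix S μ lam j 0 * S.p k lam := by
  refine eq_of_jacobiMul_sub_eq (b := S.b) (fun n => (S.ha n).ne') (z := lam)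
    (r := fun n => greenMatrix S μ lam n j) (t := fun n => greenMatrix S μ lam j 0 * S.p n lam)
    (fun n hn => ?_) ?_ k hkj
  · rw [hsol.jacobiMul_greenMatrix hd hdist, jacobiMul_const_mul, S.jacobiMul_p, if_neg hn.ne]
    ring
  · rw [greenMatrix_comm, S.hp0, mul_one]

lemma IsSolution.greenMatrix_zero_right (hsol : IsSolution S μ) (hd : 0 < d)
    (hdist : ∀ᵐ s : ℝ ∂μ, d ≤ ‖(s : ℂ) - lam‖) (k : ℕ) :
    greenMatrix S μ lam k 0 = S.q k lam + (∫ s, ((s : ℂ) - lam)⁻¹ ∂μ) * S.p k lam := by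
  refine eq_of_jacobiMul_sub_eq (b := S.b) (fun n => (S.ha n).ne') (z := lam) (N := k)
    (r := fun n => greenMatrix S μ lam n 0)
    (t := fun n => S.q n lam + (∫ s, ((s : ℂ) - lam)⁻¹ ∂μ) * S.p n lam) (fun n _ => ?_) ?_ k le_rfl
  · rw [hsol.jacobiMul_greenMatrix hd hdist, jacobiMul_add, jacobiMul_const_mul, S.jacobiMul_p,
      S.jacobiMul_q]
    ring
  · simp only [greenMatrix, S.hp0, S.hq0, one_mul, zero_add, mul_one]

lemma IsSolution.norm_greenMatrix_sq_le (hsol : IsSolution S μ) (hd : 0 < d)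
    (hdist : ∀ᵐ s : ℝ ∂μ, d ≤ ‖(s : ℂ) - lam‖) (k j : ℕ) :
    ‖greenMatrix S μ lam k j‖ ^ 2 ≤
      ‖greenMatrix S μ lam j 0‖ ^ 2 * ‖S.p k lam‖ ^ 2 +
        ‖greenMatrix S μ lam k 0‖ ^ 2 * ‖S.p j lam‖ ^ 2 := by
  rcases le_total k j with hkj | hjk
  · rw [hsol.greenMatrix_eq_of_le hd hdist hkj, norm_mul, mul_pow]
    exact le_add_of_nonneg_right (by positivity)
  · rw [greenMatrix_comm, hsol.greenMatrix_eq_of_le hd hdist hjk, norm_mul, mul_pow]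
    exact le_add_of_nonneg_left (by positivity)

/-- Multiplication by `(s - λ)⁻¹` is a Hilbert–Schmidt operator on `L²(μ)`. -/
lemma IsNExtremal.summable_integral_norm_p_mul_inv_sub_sq [IsFiniteMeasure μ]
    (hμ : IsNExtremal S μ) (hd : 0 < d) (hdist : ∀ᵐ s : ℝ ∂μ, d ≤ ‖(s : ℂ) - lam‖) :
    Summable fun j => ∫ s, ‖S.p j s * ((s : ℂ) - lam)⁻¹‖ ^ 2 ∂μ := by
  have hψ : Summable fun k => ‖greenMatrix S μ lam k 0‖ ^ 2 := by
    simpa only [integral_p_mul_inv_sub] using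
      (hμ.hasSum_norm_integral_sq (memLp_inv_sub hd hdist)).summable
  have hp := S.summable_norm_p_sq lam
  refine Summable.of_nonneg_of_le (fun j => integral_nonneg fun s => by positivity) (fun j => ?_)
    ((hψ.mul_right (∑' k, ‖S.p k lam‖ ^ 2)).add (hp.mul_left (∑' k, ‖greenMatrix S μ lam k 0‖ ^ 2)))
  have hcol := hμ.hasSum_norm_integral_sq (hμ.1.memLp_p_mul_inv_sub hd hdist j)
  rw [← hcol.tsum_eq, ← tsum_mul_left, ← tsum_mul_right, ← Summable.tsum_add
    (hp.mul_left _) (hψ.mul_right _)]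
  exact hcol.summable.tsum_le_tsum (hμ.1.norm_greenMatrix_sq_le hd hdist · j)
    ((hp.mul_left _).add (hψ.mul_right _))

/-- Parseval for `1_E (s - λ)⁻¹`, each coefficient being bounded by Cauchy–Schwarz on `E`. -/
lemma IsNExtremal.le_tsum_setIntegral_norm_p_mul_inv_sub_sq [IsFiniteMeasure μ]
    (hμ : IsNExtremal S μ) (hd : 0 < d) (hdist : ∀ᵐ s : ℝ ∂μ, d ≤ ‖(s : ℂ) - lam‖)
    {E : Set ℝ} (hE : MeasurableSet E) (hE0 : μ E ≠ 0) {c : ℝ}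
    (hc : ∀ᵐ s ∂μ, s ∈ E → c ≤ ‖((s : ℂ) - lam)⁻¹‖ ^ 2) :
    c ≤ ∑' k, ∫ s in E, ‖S.p k s * ((s : ℂ) - lam)⁻¹‖ ^ 2 ∂μ := by
  have hF := memLp_inv_sub hd hdist
  have hpF := hμ.1.memLp_p_mul_inv_sub hd hdist
  have hm : 0 < μ.real E := ENNReal.toReal_pos hE0 (measure_ne_top μ E)
  have hpars := hμ.hasSum_norm_integral_sq (hF.indicator hE)
  have hcoef : ∀ k, ∫ s, S.p k s * E.indicator (fun s => ((s : ℂ) - lam)⁻¹) s ∂μ =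
      ∫ s in E, S.p k s * ((s : ℂ) - lam)⁻¹ ∂μ := fun k => by
    rw [← integral_indicator hE]
    congr 1 with s
    exact (Set.indicator_mul_right E (fun s : ℝ => S.p k s) _).symm
  have hnorm : ∫ s, ‖E.indicator (fun s => ((s : ℂ) - lam)⁻¹) s‖ ^ 2 ∂μ =
      ∫ s in E, ‖((s : ℂ) - lam)⁻¹‖ ^ 2 ∂μ := by
    rw [← integral_indicator hE]
    congr 1 with s
    by_cases hs : s ∈ E <;> simp [hs]
  simp only [hcoef, hnorm] at hpars
  have hint : ∀ k, Integrable (fun s : ℝ => ‖S.p k s * ((s : ℂ) - lam)⁻¹‖ ^ 2) μ :=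
    fun k => (hpF k).integrable_norm_pow two_ne_zero
  have hsum : Summable fun k => ∫ s in E, ‖S.p k s * ((s : ℂ) - lam)⁻¹‖ ^ 2 ∂μ :=
    (hμ.summable_integral_norm_p_mul_inv_sub_sq hd hdist).of_nonneg_of_le
      (fun k => setIntegral_nonneg hE fun _ _ => by positivity)
      (fun k => setIntegral_le_integral (hint k) (ae_of_all _ fun _ => by positivity))
  have hcs : ∀ k, ‖∫ s in E, S.p k s * ((s : ℂ) - lam)⁻¹ ∂μ‖ ^ 2 ≤
      μ.real E * ∫ s in E, ‖S.p k s * ((s : ℂ) - lam)⁻¹‖ ^ 2 ∂μ := fun k => by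
    simpa only [measureReal_restrict_apply_univ] using norm_integral_sq_le ((hpF k).restrict E)
  refine le_of_mul_le_mul_right ?_ hm
  calc c * μ.real E = ∫ s in E, c ∂μ := by rw [setIntegral_const, smul_eq_mul, mul_comm]
    _ ≤ ∫ s in E, ‖((s : ℂ) - lam)⁻¹‖ ^ 2 ∂μ :=
      setIntegral_mono_on_ae (integrableOn_const (measure_ne_top μ E))
        (hF.integrable_norm_pow two_ne_zero).integrableOn hE hc
    _ ≤ ∑' k, μ.real E * ∫ s in E, ‖S.p k s * ((s : ℂ) - lam)⁻¹‖ ^ 2 ∂μ :=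
      hpars.tsum_eq ▸ hpars.summable.tsum_le_tsum hcs (hsum.mul_left _)
    _ = _ := by rw [tsum_mul_left, mul_comm]

lemma IsNExtremal.measure_singleton_ne_zero [IsFiniteMeasure μ] (hμ : IsNExtremal S μ)
    (hd : 0 < d) (hdist : ∀ᵐ s : ℝ ∂μ, d ≤ ‖(s : ℂ) - lam‖) {x : ℝ} (hx : x ∈ measSupport μ) :
    μ {x} ≠ 0 := by
  intro hx0
  have hlow : ∀ r ∈ Set.Ioc (0 : ℝ) 1, (‖(x : ℂ) - lam‖ + 1)⁻¹ ^ 2 ≤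
      ∑' k, ∫ s in Metric.closedBall x r, ‖S.p k s * ((s : ℂ) - lam)⁻¹‖ ^ 2 ∂μ := by
    rintro r ⟨hr0, hr1⟩
    refine hμ.le_tsum_setIntegral_norm_p_mul_inv_sub_sq hd hdist
      Metric.isClosed_closedBall.measurableSet (hx _ (Metric.closedBall_mem_nhds x hr0)) ?_
    filter_upwards [hdist] with s hs hsx
    have hsx' : ‖(s : ℂ) - x‖ ≤ 1 := by
      rw [← Complex.ofReal_sub, Complex.norm_real]
      exact (Metric.mem_closedBall.1 hsx).trans hr1
    rw [norm_inv]
    gcongr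
    · exact hd.trans_le hs
    · calc ‖(s : ℂ) - lam‖ ≤ ‖(s : ℂ) - x‖ + ‖(x : ℂ) - lam‖ :=
            norm_sub_le_norm_sub_add_norm_sub _ _ _
        _ ≤ ‖(x : ℂ) - lam‖ + 1 := by linarith
  have hint : ∀ k, Integrable (fun s : ℝ => ‖S.p k s * ((s : ℂ) - lam)⁻¹‖ ^ 2) μ :=
    fun k => (hμ.1.memLp_p_mul_inv_sub hd hdist k).integrable_norm_pow two_ne_zero
  have hlim : Tendsto (fun r => ∑' k, ∫ s in Metric.closedBall x r,
      ‖S.p k s * ((s : ℂ) - lam)⁻¹‖ ^ 2 ∂μ) (𝓝[>] 0) (𝓝 0) := by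
    simpa using tendsto_tsum_of_dominated_convergence
      (hμ.summable_integral_norm_p_mul_inv_sub_sq hd hdist)
      (fun k => tendsto_setIntegral_closedBall_of_measure_singleton (hint k) hx0)
      (.of_forall fun r k => by
        rw [Real.norm_of_nonneg (setIntegral_nonneg Metric.isClosed_closedBall.measurableSet
          fun _ _ => by positivity)]
        exact setIntegral_le_integral (hint k) (.of_forall fun _ => by positivity))
  have := ge_of_tendsto hlim (eventually_of_mem (Ioc_mem_nhdsGT one_pos) hlow)
  exact this.not_gt (by positivity)

lemma IsNExtremal.hasSum_mul_p_of_measure_singleton_ne_zero [IsFiniteMeasure μ]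
    (hμ : IsNExtremal S μ) (hd : 0 < d) (hdist : ∀ᵐ s : ℝ ∂μ, d ≤ ‖(s : ℂ) - lam‖) {x : ℝ}
    (hx : μ {x} ≠ 0) :
    HasSum (fun k => (S.q k lam + (∫ s, ((s : ℂ) - lam)⁻¹ ∂μ) * S.p k lam) * S.p k x)
      ((x : ℂ) - lam)⁻¹ := by
  have he : MemLp (({x} : Set ℝ).indicator (1 : ℝ → ℂ)) 2 μ :=
    (memLp_const 1).indicator (measurableSet_singleton x)
  have hconj : ∀ s, conj (({x} : Set ℝ).indicator (1 : ℝ → ℂ) s) =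
      ({x} : Set ℝ).indicator (1 : ℝ → ℂ) s := fun s => by
    by_cases hs : s = x <;> simp [hs]
  have hm : (μ.real {x} : ℂ) ≠ 0 :=
    Complex.ofReal_ne_zero.2 (ENNReal.toReal_ne_zero.2 ⟨hx, measure_ne_top μ _⟩)
  have := hμ.hasSum_conj_integral_mul_integral he (memLp_inv_sub hd hdist)
  simp only [integral_mul_indicator_singleton, hconj, mul_comm (({x} : Set ℝ).indicator _ _),
    integral_p_mul_inv_sub, hμ.1.greenMatrix_zero_right hd hdist, map_mul, Complex.conj_ofReal,
    S.conj_p_ofReal, mul_assoc] at this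
  simpa only [← mul_assoc, inv_mul_cancel₀ hm, one_mul, mul_comm (S.p _ _)]
    using this.mul_left (μ.real {x} : ℂ)⁻¹

end Moments

/-- For an N-extremal solution `μ` and `λ ∉ supp(μ)`: for every `x ∈ supp(μ)` one has
`D(λ,x) ≠ 0` and `∫ 1/(s−λ) dμ(s) = −C(λ,x)/D(λ,x)`; in particular the ratio
`C(λ,x)/D(λ,x)` does not depend on `x ∈ supp(μ)`. -/
theorem stmt8 (S : JacobiSetup) (μ : Measure ℝ) (hμ : IsNExtremal S μ)
    (lam : ℂ) (hlam : ∀ x ∈ measSupport μ, (x : ℂ) ≠ lam) :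
    (∀ x ∈ measSupport μ, nevD S lam (x : ℂ) ≠ 0 ∧
      ∫ s : ℝ, ((s : ℂ) - lam)⁻¹ ∂μ = -(nevC S lam (x : ℂ) / nevD S lam (x : ℂ))) ∧
    ∀ x ∈ measSupport μ, ∀ y ∈ measSupport μ,
      nevC S lam (x : ℂ) / nevD S lam (x : ℂ) = nevC S lam (y : ℂ) / nevD S lam (y : ℂ) := by
  have : IsProbabilityMeasure μ := hμ.1.1
  obtain ⟨d, hd, hdist⟩ := exists_pos_ae_le_norm_sub μ hlam
  have key : ∀ x ∈ measSupport μ, nevD S lam (x : ℂ) ≠ 0 ∧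
      ∫ s : ℝ, ((s : ℂ) - lam)⁻¹ ∂μ = -(nevC S lam (x : ℂ) / nevD S lam (x : ℂ)) := by
    intro x hx
    have hCD := S.nevC_add_mul_nevD_eq_zero (hlam x hx)
      (hμ.hasSum_mul_p_of_measure_singleton_ne_zero hd hdist
        (hμ.measure_singleton_ne_zero hd hdist hx))
    have hD := S.nevD_ne_zero_of_nevC_add_mul_nevD_eq_zero hCD
    refine ⟨hD, ?_⟩
    rw [eq_neg_iff_add_eq_zero, add_div' _ _ _ hD, div_eq_zero_iff]
    exact .inl (by linear_combination hCD)
  exact ⟨key, fun x hx y hy => neg_injective ((key x hx).2.symm.trans (key y hy).2)⟩
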